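/- Let γ ∈ ℝ satisfy γ² + γ − 1 = 0, and consider the ten lines of 𝒞_γ in ℙ²(ℂ). Then: (a) the ten lines are pairwise distinct; (b) M₁,…,M₅ all pass through the point [0:1:0]; (c) for each (i,{j,k}) in the list T' := {(1,{2,3}), (1,{4,5}), (2,{1,5}), (2,{3,4}), (3,{1,4}), (3,{2,5}), (4,{1,2}), (4,{3,5}), (5,{2,4}), (5,{1,3})}, the three lines M_i, L_j, L_k have a common point; (d) no triple of the ten lines other than those in (b) and (c) has a common point. -/

import Mathlib

open scoped LinearAlgebra.Projectivization

/-- The complex projective plane `ℙ²(ℂ)`, the projectivization of `ℂ³`. -/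
abbrev Pt := ℙ ℂ (Fin 3 → ℂ)

/-- The projective line `{[x:y:z] | a·x + b·y + c·z = 0}` in `ℙ²(ℂ)` determined by the
linear form with coefficients `(a, b, c)`.  (Vanishing of a linear form is independent
of the choice of homogeneous coordinates, so testing it on `p.rep` is equivalent to
testing it on any representative.) -/
def pline (a b c : ℂ) : Set Pt :=
  {p | a * p.rep 0 + b * p.rep 1 + c * p.rep 2 = 0}

/-- The lines `M₁,…,M₅` of the arrangement `𝒞_γ` (0-based: `Mline γ i = M_{i+1}`):
`M₁: z=0`, `M₂: x=0`, `M₃: x=z`, `M₄: x=−(γ+1)z`, `M₅: x=(γ+2)z`. -/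
noncomputable def Mline (γ : ℝ) : Fin 5 → Set Pt :=
  ![pline 0 0 1, pline 1 0 0, pline 1 0 (-1),
    pline 1 0 ((γ : ℂ) + 1), pline 1 0 (-((γ : ℂ) + 2))]

/-- The lines `L₁,…,L₅` of the arrangement `𝒞_γ` (0-based: `Lline γ i = L_{i+1}`):
`L₁: y=x`, `L₂: y=γ(x−z)`, `L₃: y=γx+z`, `L₄: y=z`, `L₅: y=0`. -/
noncomputable def Lline (γ : ℝ) : Fin 5 → Set Pt :=
  ![pline 1 (-1) 0, pline (γ : ℂ) (-1) (-(γ : ℂ)), pline (γ : ℂ) (-1) 1,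
    pline 0 1 (-1), pline 0 1 0]

/-- The table `T'` of concurrent triples `M_i, L_j, L_k` of `𝒞_γ` (0-based indices):
it encodes `(1,{2,3}), (1,{4,5}), (2,{1,5}), (2,{3,4}), (3,{1,4}), (3,{2,5}),
(4,{1,2}), (4,{3,5}), (5,{2,4}), (5,{1,3})` in the paper's 1-based labels. -/
def Tpairs : List (Fin 5 × Fin 5 × Fin 5) :=
  [(0,1,2), (0,3,4), (1,0,4), (1,2,3), (2,0,3), (2,1,4), (3,0,1), (3,2,4), (4,1,3), (4,0,2)]

namespace S10


def zmul (x y : ℤ × ℤ) : ℤ × ℤ := (x.1*y.1 + x.2*y.2, x.1*y.2 + x.2*y.1 - x.2*y.2)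
def zadd (x y : ℤ × ℤ) : ℤ × ℤ := (x.1 + y.1, x.2 + y.2)
def zsub (x y : ℤ × ℤ) : ℤ × ℤ := (x.1 - y.1, x.2 - y.2)

noncomputable def phi (γ : ℝ) (z : ℤ × ℤ) : ℂ := (z.1 : ℂ) + (z.2 : ℂ) * ((γ : ℝ) : ℂ)

def coeffZ : Fin 5 ⊕ Fin 5 → Fin 3 → ℤ × ℤ
  | .inl i => ![![(1,0),(-1,0),(0,0)], ![(0,1),(-1,0),(0,-1)], ![(0,1),(-1,0),(1,0)],
                ![(0,0),(1,0),(-1,0)], ![(0,0),(1,0),(0,0)]] i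
  | .inr i => ![![(0,0),(0,0),(1,0)], ![(1,0),(0,0),(0,0)], ![(1,0),(0,0),(-1,0)],
                ![(1,0),(0,0),(1,1)], ![(1,0),(0,0),(-2,-1)]] i

def evalZ (s : Fin 5 ⊕ Fin 5) (v : Fin 3 → ℤ × ℤ) : ℤ × ℤ :=
  zadd (zadd (zmul (coeffZ s 0) (v 0)) (zmul (coeffZ s 1) (v 1))) (zmul (coeffZ s 2) (v 2))

def detZ (a b c : Fin 5 ⊕ Fin 5) : ℤ × ℤ :=
  let u := coeffZ a; let v := coeffZ b; let w := coeffZ c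
  zadd (zadd
    (zmul (u 0) (zsub (zmul (v 1) (w 2)) (zmul (v 2) (w 1))))
    (zmul (u 1) (zsub (zmul (v 2) (w 0)) (zmul (v 0) (w 2)))))
    (zmul (u 2) (zsub (zmul (v 0) (w 1)) (zmul (v 1) (w 0))))

variable {γ : ℝ}

lemma phi_zadd (x y : ℤ × ℤ) : phi γ (zadd x y) = phi γ x + phi γ y := by
  simp only [phi, zadd]; push_cast; ring

lemma phi_zsub (x y : ℤ × ℤ) : phi γ (zsub x y) = phi γ x - phi γ y := by
  simp only [phi, zsub]; push_cast; ring

lemma phi_zmul (hγ : γ ^ 2 + γ - 1 = 0) (x y : ℤ × ℤ) :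
    phi γ (zmul x y) = phi γ x * phi γ y := by
  have hc : ((γ : ℂ)) ^ 2 + (γ : ℂ) - 1 = 0 := by exact_mod_cast congrArg (fun t : ℝ => (t : ℂ)) hγ
  simp only [phi, zmul]; push_cast
  linear_combination (-(x.2 : ℂ) * (y.2 : ℂ)) * hc

lemma phi_eq_zero (hγ : γ ^ 2 + γ - 1 = 0) (z : ℤ × ℤ) :
    phi γ z = 0 ↔ z = (0, 0) := by
  constructor
  · intro h
    have hr : (z.1 : ℝ) + (z.2 : ℝ) * γ = 0 := by
      simp only [phi] at h; exact_mod_cast h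
    rcases eq_or_ne z.2 0 with h2 | h2
    · have : (z.1 : ℝ) = 0 := by rw [h2] at hr; push_cast at hr; linarith
      have h1 : z.1 = 0 := by exact_mod_cast this
      cases z; simp_all
    · exfalso
      have hz2 : (z.2 : ℝ) ≠ 0 := by exact_mod_cast h2
      have hsq : (2 * γ + 1) ^ 2 = 5 := by nlinarith
      have hs5 : Real.sqrt 5 = |2 * γ + 1| := by
        rw [← hsq, Real.sqrt_sq_eq_abs]
      have h5 : Irrational (Real.sqrt 5) := by
        have := (Nat.prime_five).irrational_sqrt
        simpa using this
      apply h5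
      refine ⟨|(z.2 - 2 * z.1 : ℤ) / (z.2 : ℚ)|, ?_⟩
      rw [hs5]
      push_cast
      congr 1
      field_simp
      linear_combination (-2 : ℝ) * hr
  · rintro rfl; simp [phi]

lemma mem_pline {p : Pt} {a b c : ℂ} :
    p ∈ pline a b c ↔ a * p.rep 0 + b * p.rep 1 + c * p.rep 2 = 0 := Iff.rfl

lemma Cline_eq (γ : ℝ) (s : Fin 5 ⊕ Fin 5) :
    Sum.elim (Lline γ) (Mline γ) s
      = pline (phi γ (coeffZ s 0)) (phi γ (coeffZ s 1)) (phi γ (coeffZ s 2)) := by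
  rcases s with i | i <;> fin_cases i <;>
    · show pline _ _ _ = pline _ _ _
      congr 1 <;> simp [phi, coeffZ, Matrix.vecHead, Matrix.vecTail] <;> push_cast <;> ring

lemma mem_pline_mk (a b c : ℂ) (v : Fin 3 → ℂ) (hv : v ≠ 0) :
    Projectivization.mk ℂ v hv ∈ pline a b c ↔ a * v 0 + b * v 1 + c * v 2 = 0 := by
  obtain ⟨u, hu⟩ := (Projectivization.mk_eq_mk_iff ℂ _ _
      (Projectivization.rep_nonzero _) hv).mp
      (Projectivization.mk_rep (Projectivization.mk ℂ v hv))
  rw [mem_pline, ← hu]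
  simp only [Pi.smul_apply, Units.smul_def, smul_eq_mul]
  rw [show a * (↑u * v 0) + b * (↑u * v 1) + c * (↑u * v 2)
      = (u : ℂ) * (a * v 0 + b * v 1 + c * v 2) from by ring, mul_eq_zero]
  simp [Units.ne_zero u]

lemma phi_evalZ (hγ : γ ^ 2 + γ - 1 = 0) (s : Fin 5 ⊕ Fin 5) (w : Fin 3 → ℤ × ℤ) :
    phi γ (evalZ s w) = phi γ (coeffZ s 0) * phi γ (w 0) + phi γ (coeffZ s 1) * phi γ (w 1)
      + phi γ (coeffZ s 2) * phi γ (w 2) := by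
  simp only [evalZ, phi_zadd, phi_zmul hγ]

lemma mem_C_mk (hγ : γ ^ 2 + γ - 1 = 0) (s : Fin 5 ⊕ Fin 5) (w : Fin 3 → ℤ × ℤ)
    (hw : (fun k => phi γ (w k)) ≠ 0) :
    Projectivization.mk ℂ (fun k => phi γ (w k)) hw ∈ Sum.elim (Lline γ) (Mline γ) s
      ↔ evalZ s w = (0, 0) := by
  rw [Cline_eq, mem_pline_mk, ← phi_eq_zero hγ, phi_evalZ hγ]

lemma nonzero_vec (hγ : γ ^ 2 + γ - 1 = 0) {w : Fin 3 → ℤ × ℤ} (hw : ∃ k, w k ≠ (0, 0)) :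
    (fun k => phi γ (w k)) ≠ 0 := by
  obtain ⟨k, hk⟩ := hw
  intro h0
  exact hk ((phi_eq_zero hγ (w k)).mp (congrFun h0 k))

lemma no_common (hγ : γ ^ 2 + γ - 1 = 0) (a b c : Fin 5 ⊕ Fin 5)
    (hd : detZ a b c ≠ (0, 0)) :
    ¬ ∃ p : Pt, p ∈ Sum.elim (Lline γ) (Mline γ) a ∧ p ∈ Sum.elim (Lline γ) (Mline γ) b
      ∧ p ∈ Sum.elim (Lline γ) (Mline γ) c := by
  rintro ⟨p, ha, hb, hc⟩
  rw [Cline_eq, mem_pline] at ha hb hc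
  set A : Matrix (Fin 3) (Fin 3) ℂ :=
    Matrix.of ![fun k => phi γ (coeffZ a k), fun k => phi γ (coeffZ b k),
      fun k => phi γ (coeffZ c k)] with hA
  have hdet : A.det = phi γ (detZ a b c) := by
    rw [Matrix.det_fin_three]
    simp only [hA, detZ, phi_zadd, phi_zsub, phi_zmul hγ, Matrix.of_apply,
      Matrix.cons_val', Matrix.cons_val_zero, Matrix.cons_val_one, Matrix.head_cons,
      Matrix.empty_val', Matrix.cons_val_fin_one, Matrix.head_fin_const,
      Matrix.cons_val_two, Matrix.tail_cons]
    ring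
  have hdet0 : A.det ≠ 0 := by
    rw [hdet, Ne, phi_eq_zero hγ]; exact hd
  have hmv : A.mulVec p.rep = 0 := by
    funext i
    fin_cases i <;>
      simp only [Matrix.mulVec, dotProduct, Fin.sum_univ_three, hA, Matrix.of_apply,
        Matrix.cons_val', Matrix.cons_val_zero, Matrix.cons_val_one, Matrix.head_cons,
        Matrix.empty_val', Matrix.cons_val_fin_one, Matrix.head_fin_const,
        Matrix.cons_val_two, Matrix.tail_cons, Pi.zero_apply] <;>
      assumption
  exact p.rep_nonzero (Matrix.eq_zero_of_mulVec_eq_zero hdet0 hmv)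




def ptZ : Fin 5 ⊕ Fin 5 → Fin 2 → Fin 3 → ℤ × ℤ
  | .inl i => ![![![(1,0),(1,0),(0,0)], ![(0,0),(0,0),(1,0)]],
                ![![(1,0),(0,1),(0,0)], ![(1,0),(0,0),(1,0)]],
                ![![(1,0),(0,1),(0,0)], ![(0,0),(1,0),(1,0)]],
                ![![(1,0),(0,0),(0,0)], ![(0,0),(1,0),(1,0)]],
                ![![(1,0),(0,0),(0,0)], ![(0,0),(0,0),(1,0)]]] i
  | .inr i => ![![![(1,0),(0,0),(0,0)], ![(0,0),(1,0),(0,0)]],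
                ![![(0,0),(1,0),(0,0)], ![(0,0),(0,0),(1,0)]],
                ![![(1,0),(0,0),(1,0)], ![(0,0),(1,0),(0,0)]],
                ![![(-1,-1),(0,0),(1,0)], ![(0,0),(1,0),(0,0)]],
                ![![(2,1),(0,0),(1,0)], ![(0,0),(1,0),(0,0)]]] i

def witL : List ((Fin 5 × Fin 5 × Fin 5) × (Fin 3 → ℤ × ℤ)) :=
  [((0,1,2), ![(1,0),(0,1),(0,0)]),
   ((0,3,4), ![(1,0),(0,0),(0,0)]),
   ((1,0,4), ![(0,0),(0,0),(1,0)]),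
   ((1,2,3), ![(0,0),(1,0),(1,0)]),
   ((2,0,3), ![(1,0),(1,0),(1,0)]),
   ((2,1,4), ![(1,0),(0,0),(1,0)]),
   ((3,0,1), ![(-1,-1),(-1,-1),(1,0)]),
   ((3,2,4), ![(-1,-1),(0,0),(1,0)]),
   ((4,1,3), ![(2,1),(1,0),(1,0)]),
   ((4,0,2), ![(2,1),(2,1),(1,0)])]

set_option maxRecDepth 4000 in
lemma ptZ_on : ∀ (s : Fin 5 ⊕ Fin 5) (i : Fin 2), evalZ s (ptZ s i) = (0, 0) := by decide

set_option maxRecDepth 4000 in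
lemma ptZ_ne : ∀ (s : Fin 5 ⊕ Fin 5) (i : Fin 2), ∃ k, ptZ s i k ≠ (0, 0) := by decide

set_option maxRecDepth 4000 in
lemma sep : ∀ x y : Fin 5 ⊕ Fin 5, x ≠ y → ∃ i : Fin 2, evalZ y (ptZ x i) ≠ (0, 0) := by
  decide

set_option maxRecDepth 4000 in
lemma wit_ok : ∀ e ∈ witL, evalZ (.inr e.1.1) e.2 = (0,0) ∧ evalZ (.inl e.1.2.1) e.2 = (0,0) ∧
    evalZ (.inl e.1.2.2) e.2 = (0,0) ∧ ∃ k, e.2 k ≠ (0,0) := by decide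

set_option maxRecDepth 4000 in
lemma wit_all : ∀ x ∈ Tpairs, ∃ e ∈ witL, e.1 = x := by decide

set_option synthInstance.maxHeartbeats 1000000 in
set_option synthInstance.maxSize 400 in
set_option maxRecDepth 8000 in
lemma classify : ∀ a b c : Fin 5 ⊕ Fin 5, a ≠ b → a ≠ c → b ≠ c → detZ a b c = (0,0) →
    ((∃ i j k, a = Sum.inr i ∧ b = Sum.inr j ∧ c = Sum.inr k) ∨
     (∃ i j k, (i, j, k) ∈ Tpairs ∧
        ({a, b, c} : Finset (Fin 5 ⊕ Fin 5)) = {Sum.inr i, Sum.inl j, Sum.inl k})) := by decide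

lemma common {γ : ℝ} (hγ : γ ^ 2 + γ - 1 = 0) (i j k : Fin 5) (w : Fin 3 → ℤ × ℤ)
    (hw : ∃ m, w m ≠ ((0:ℤ), (0:ℤ)))
    (h1 : evalZ (.inr i) w = (0,0)) (h2 : evalZ (.inl j) w = (0,0))
    (h3 : evalZ (.inl k) w = (0,0)) :
    ∃ p : Pt, p ∈ Mline γ i ∧ p ∈ Lline γ j ∧ p ∈ Lline γ k := by
  have hv := nonzero_vec hγ hw
  exact ⟨_, (mem_C_mk hγ (.inr i) w hv).mpr h1, (mem_C_mk hγ (.inl j) w hv).mpr h2,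
    (mem_C_mk hγ (.inl k) w hv).mpr h3⟩



end S10

/-- For `γ` a root of `γ² + γ − 1 = 0`, in the arrangement `𝒞_γ` of ten lines of `ℙ²(ℂ)`:
(a) the ten lines are pairwise distinct; (b) `M₁,…,M₅` all pass through `[0:1:0]`;
(c) for each `(i,{j,k})` in the table `T'` the lines `M_i, L_j, L_k` have a common point;
(d) no triple of the ten lines other than those of (b) and (c) has a common point. -/
theorem stmt_10 (γ : ℝ) (hγ : γ ^ 2 + γ - 1 = 0) :
    let C : Fin 5 ⊕ Fin 5 → Set Pt := Sum.elim (Lline γ) (Mline γ)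
    Function.Injective C ∧
    (∀ i : Fin 5,
      Projectivization.mk ℂ (![0, 1, 0] : Fin 3 → ℂ)
        (by intro h; have h1 := congrFun h 1; simp at h1) ∈ Mline γ i) ∧
    (∀ x ∈ Tpairs, ∃ p : Pt, p ∈ Mline γ x.1 ∧ p ∈ Lline γ x.2.1 ∧ p ∈ Lline γ x.2.2) ∧
    (∀ a b c : Fin 5 ⊕ Fin 5, a ≠ b → a ≠ c → b ≠ c →
      (∃ p : Pt, p ∈ C a ∧ p ∈ C b ∧ p ∈ C c) →
      ((∃ i j k, a = Sum.inr i ∧ b = Sum.inr j ∧ c = Sum.inr k) ∨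
       (∃ i j k, (i, j, k) ∈ Tpairs ∧
          ({a, b, c} : Finset (Fin 5 ⊕ Fin 5)) = {Sum.inr i, Sum.inl j, Sum.inl k}))) := by
  intro C
  have hC : C = Sum.elim (Lline γ) (Mline γ) := rfl
  refine ⟨?_, ?_, ?_, ?_⟩
  · -- (a) injectivity
    intro x y h
    by_contra hne
    obtain ⟨i, hi⟩ := S10.sep x y hne
    have hv := S10.nonzero_vec hγ (S10.ptZ_ne x i)
    have hp : Projectivization.mk ℂ _ hv ∈ C x := by
      rw [hC]; exact (S10.mem_C_mk hγ x _ hv).mpr (S10.ptZ_on x i)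
    rw [h, hC] at hp
    exact hi ((S10.mem_C_mk hγ y _ hv).mp hp)
  · -- (b)
    intro i
    fin_cases i <;> exact (S10.mem_pline_mk _ _ _ _ _).mpr (by norm_num [Matrix.cons_val_two])
  · -- (c)
    intro x hx
    obtain ⟨e, he, rfl⟩ := S10.wit_all x hx
    obtain ⟨h1, h2, h3, hnz⟩ := S10.wit_ok e he
    exact S10.common hγ _ _ _ e.2 hnz h1 h2 h3
  · -- (d)
    intro a b c hab hac hbc hp
    by_cases h0 : S10.detZ a b c = (0, 0)
    · exact S10.classify a b c hab hac hbc h0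
    · rw [hC] at hp
      exact absurd hp (S10.no_common hγ a b c h0)
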